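/- arXiv:2005.09557 — 2 statements merged into one kernel-verified Lean document; each statement's English description precedes it below -/
import Mathlib

section
/- Let $X$ be a separable complex Banach space and $T$ a bounded linear operator on $X$. If the linear span of $\bigcup_{|\lambda|<1} \ker(T - \lambda I)$ is dense in $X$ and the linear span of $\bigcup_{|\lambda|>1} \ker(T - \lambda I)$ is dense in $X$, then $T$ is hypercyclic (Godefroy–Shapiro criterion). -/
/-- An operator `T` is hypercyclic if some orbit `{T^n x : n ≥ 0}` is dense. -/
def Hypercyclic {X : Type*} [NormedAddCommGroup X] [NormedSpace ℂ X]
    (T : X →L[ℂ] X) : Prop :=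
  ∃ x : X, Dense (Set.range fun n : ℕ => (T ^ n) x)

/-!
Eigenvectors for eigenvalues of modulus `< 1` have forward orbits tending to `0`; eigenvectors
for eigenvalues of modulus `> 1` are reached from arbitrarily small vectors, namely
`T ^ n (μ⁻¹ ^ n • z) = z`. Both properties pass to linear combinations, so the hypotheses give
two dense subspaces. Given open `U` and `V`, pick `y ∈ U` with `T ^ n y → 0` and `z ∈ V` with
`T ^ n u n → z` for some `u n → 0`; then `y + u n ∈ U` and `T ^ n (y + u n) ∈ V` for large `n`.
So `T` is topologically transitive, and Birkhoff's Baire category argument yields a dense orbit.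
-/

open Filter Topology Set

theorem dense_setOf_dense_range_iterate {X : Type*} [TopologicalSpace X] [BaireSpace X]
    [SecondCountableTopology X] {f : X → X} (hf : Continuous f)
    (htrans : ∀ U V : Set X, IsOpen U → U.Nonempty → IsOpen V → V.Nonempty →
      ∃ n : ℕ, (U ∩ f^[n] ⁻¹' V).Nonempty) :
    Dense {x | Dense (range fun n : ℕ => f^[n] x)} := by
  obtain ⟨B, hBc, hBempty, hB⟩ := TopologicalSpace.exists_countable_basis X
  have hopen : ∀ V ∈ B, IsOpen (⋃ n : ℕ, f^[n] ⁻¹' V) := fun V hV =>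
    isOpen_iUnion fun n => (hB.isOpen hV).preimage (hf.iterate n)
  have hdense : ∀ V ∈ B, Dense (⋃ n : ℕ, f^[n] ⁻¹' V) := by
    intro V hV
    refine dense_iff_inter_open.2 fun U hU hUne => ?_
    have hVne : V.Nonempty := nonempty_iff_ne_empty.2 fun h => hBempty (h ▸ hV)
    obtain ⟨n, x, hxU, hxV⟩ := htrans U V hU hUne (hB.isOpen hV) hVne
    exact ⟨x, hxU, mem_iUnion.2 ⟨n, hxV⟩⟩
  refine (dense_biInter_of_isOpen hopen hBc hdense).mono fun x hx => ?_
  refine hB.dense_iff.2 fun V hV hVne => ?_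
  obtain ⟨n, hn⟩ := mem_iUnion.1 (mem_iInter₂.1 hx V hV)
  exact ⟨f^[n] x, hn, mem_range_self n⟩

section StableUnstable

variable {R X : Type*} [Semiring R] [TopologicalSpace X] [AddCommMonoid X] [ContinuousAdd X]
  [Module R X] [ContinuousConstSMul R X] (T : X →L[R] X)

def stableSubmodule : Submodule R X where
  carrier := {y | Tendsto (fun n : ℕ => (T ^ n) y) atTop (𝓝 0)}
  zero_mem' := by simpa using tendsto_const_nhds
  add_mem' {a b} (ha : Tendsto _ _ _) (hb : Tendsto _ _ _) := by
    simpa only [mem_ofPred_eq, map_add, add_zero] using ha.add hb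
  smul_mem' c a (ha : Tendsto _ _ _) := by
    simpa only [mem_ofPred_eq, map_smul, smul_zero] using ha.const_smul c

/-- An approximate form of "the backward orbit tends to `0`". -/
def unstableSubmodule : Submodule R X where
  carrier := {z | ∃ u : ℕ → X, Tendsto u atTop (𝓝 0) ∧
    Tendsto (fun n : ℕ => (T ^ n) (u n)) atTop (𝓝 z)}
  zero_mem' := ⟨0, tendsto_const_nhds, by simpa using tendsto_const_nhds⟩
  add_mem' := by
    rintro a b ⟨u, hu, hua⟩ ⟨v, hv, hvb⟩
    exact ⟨fun n => u n + v n, by simpa using hu.add hv, by simpa using hua.add hvb⟩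
  smul_mem' := by
    rintro c a ⟨u, hu, hua⟩
    exact ⟨fun n => c • u n, by simpa using hu.const_smul c, by simpa using hua.const_smul c⟩

theorem exists_mem_pow_apply_mem_of_dense_stable_unstable
    (hs : Dense (stableSubmodule T : Set X)) (hu : Dense (unstableSubmodule T : Set X))
    {U V : Set X} (hU : IsOpen U) (hUne : U.Nonempty) (hV : IsOpen V) (hVne : V.Nonempty) :
    ∃ n : ℕ, ∃ x ∈ U, (T ^ n) x ∈ V := by
  obtain ⟨y, hyU, hy⟩ := hs.inter_open_nonempty U hU hUne
  obtain ⟨z, hzV, u, hu0, huz⟩ := hu.inter_open_nonempty V hV hVne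
  have hsum : Tendsto (fun n : ℕ => y + u n) atTop (𝓝 y) := by
    simpa using tendsto_const_nhds.add hu0
  have hpow : Tendsto (fun n : ℕ => (T ^ n) (y + u n)) atTop (𝓝 z) := by
    simpa using (show Tendsto (fun n : ℕ => (T ^ n) y) atTop (𝓝 0) from hy).add huz
  obtain ⟨n, hnU, hnV⟩ := ((hsum.eventually_mem (hU.mem_nhds hyU)).and
    (hpow.eventually_mem (hV.mem_nhds hzV))).exists
  exact ⟨n, y + u n, hnU, hnV⟩

end StableUnstable

theorem ContinuousLinearMap.pow_apply_of_apply_eq_smul {R X : Type*} [Semiring R]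
    [TopologicalSpace X] [AddCommMonoid X] [Module R X] {T : X →L[R] X} {μ : R} {y : X}
    (h : T y = μ • y) (n : ℕ) : (T ^ n) y = μ ^ n • y := by
  induction n with
  | zero => simp
  | succ n ih => rw [pow_succ', mul_apply_eq_comp, ih, map_smul, h, smul_smul, pow_succ]

theorem ContinuousLinearMap.apply_eq_smul_of_mem_ker_sub_smul_one {R X : Type*} [CommRing R]
    [TopologicalSpace X] [AddCommGroup X] [IsTopologicalAddGroup X] [Module R X]
    [ContinuousConstSMul R X] {T : X →L[R] X} {μ : R} {y : X}
    (h : y ∈ LinearMap.ker ((T - μ • (1 : X →L[R] X) : X →L[R] X) : X →ₗ[R] X)) :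
    T y = μ • y := by
  simpa [sub_eq_zero] using h

section Eigenvectors

variable {𝕜 X : Type*} [NormedField 𝕜] [NormedAddCommGroup X] [NormedSpace 𝕜 X]
  {T : X →L[𝕜] X} {μ : 𝕜} {y : X}

theorem mem_stableSubmodule_of_apply_eq_smul (hμ : ‖μ‖ < 1) (h : T y = μ • y) :
    y ∈ stableSubmodule T := by
  show Tendsto (fun n : ℕ => (T ^ n) y) atTop (𝓝 0)
  simp_rw [T.pow_apply_of_apply_eq_smul h]
  simpa using (tendsto_pow_atTop_nhds_zero_of_norm_lt_one hμ).smul_const y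

theorem mem_unstableSubmodule_of_apply_eq_smul (hμ : 1 < ‖μ‖) (h : T y = μ • y) :
    y ∈ unstableSubmodule T := by
  have hμ0 : μ ≠ 0 := norm_pos_iff.1 (one_pos.trans hμ)
  have hμinv : ‖μ⁻¹‖ < 1 := by rw [norm_inv]; exact inv_lt_one_of_one_lt₀ hμ
  refine ⟨fun n => μ⁻¹ ^ n • y, ?_, ?_⟩
  · simpa using (tendsto_pow_atTop_nhds_zero_of_norm_lt_one hμinv).smul_const y
  · have hcancel (n : ℕ) : (T ^ n) (μ⁻¹ ^ n • y) = y := by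
      rw [map_smul, T.pow_apply_of_apply_eq_smul h, smul_smul, ← mul_pow, inv_mul_cancel₀ hμ0,
        one_pow, one_smul]
    simp only [hcancel, tendsto_const_nhds]

end Eigenvectors

/-- Godefroy–Shapiro criterion: if the eigenvectors of `T` corresponding to eigenvalues
of modulus `< 1` span a dense subspace, and likewise for eigenvalues of modulus `> 1`,
then `T` is hypercyclic. -/
theorem stmt1 {X : Type*} [NormedAddCommGroup X] [NormedSpace ℂ X]
    [CompleteSpace X] [TopologicalSpace.SeparableSpace X]
    (T : X →L[ℂ] X)
    (h1 : Dense (↑(Submodule.span ℂ (⋃ (μ : ℂ) (_ : ‖μ‖ < 1),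
      (LinearMap.ker ((T - μ • (1 : X →L[ℂ] X) : X →L[ℂ] X) : X →ₗ[ℂ] X) : Set X))) : Set X))
    (h2 : Dense (↑(Submodule.span ℂ (⋃ (μ : ℂ) (_ : ‖μ‖ > 1),
      (LinearMap.ker ((T - μ • (1 : X →L[ℂ] X) : X →L[ℂ] X) : X →ₗ[ℂ] X) : Set X))) : Set X)) :
    Hypercyclic T := by
  have hs : Dense (stableSubmodule T : Set X) :=
    h1.mono <| Submodule.span_le.2 <| iUnion₂_subset fun _ hμ _ hy =>
      mem_stableSubmodule_of_apply_eq_smul hμ (T.apply_eq_smul_of_mem_ker_sub_smul_one hy)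
  have hu : Dense (unstableSubmodule T : Set X) :=
    h2.mono <| Submodule.span_le.2 <| iUnion₂_subset fun _ hμ _ hy =>
      mem_unstableSubmodule_of_apply_eq_smul hμ (T.apply_eq_smul_of_mem_ker_sub_smul_one hy)
  have htrans (U V : Set X) (hU : IsOpen U) (hUne : U.Nonempty) (hV : IsOpen V)
      (hVne : V.Nonempty) : ∃ n : ℕ, (U ∩ (⇑T)^[n] ⁻¹' V).Nonempty := by
    obtain ⟨n, x, hxU, hxV⟩ :=
      exists_mem_pow_apply_mem_of_dense_stable_unstable T hs hu hU hUne hV hVne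
    exact ⟨n, x, hxU, by rwa [mem_preimage, ← FunLike.coe_pow_eq_iterate]⟩
  obtain ⟨x, hx⟩ := (dense_setOf_dense_range_iterate T.continuous htrans).nonempty
  exact ⟨x, by simpa only [FunLike.coe_pow_eq_iterate] using hx.out⟩
end

section
/- For $\alpha \in \mathbb{C}$ with $|\alpha| > 1$, the operator $\alpha S^*$ on $\ell^2(\mathbb{N})$, where $S^*$ is the backward shift $(a_0, a_1, a_2, \dots) \mapsto (a_1, a_2, a_3, \dots)$, is hypercyclic (Rolewicz's theorem). -/
open Set Filter Topology TopologicalSpace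

def TopologicallyTransitive {X : Type*} [TopologicalSpace X] (f : X → X) : Prop :=
  ∀ U V : Set X, IsOpen U → IsOpen V → U.Nonempty → V.Nonempty →
    ∃ n : ℕ, (U ∩ f^[n] ⁻¹' V).Nonempty

theorem TopologicallyTransitive.exists_dense_orbit {X : Type*} [TopologicalSpace X]
    [Nonempty X] [BaireSpace X] [SecondCountableTopology X] {f : X → X} (hf : Continuous f)
    (htrans : TopologicallyTransitive f) : ∃ x, Dense (range fun n => f^[n] x) := by
  obtain ⟨b, hbc, hb_empty, hb⟩ := exists_countable_basis X
  have hopen : ∀ o ∈ b, IsOpen (⋃ n, f^[n] ⁻¹' o) := fun o ho =>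
    isOpen_iUnion fun n => (hb.isOpen ho).preimage (hf.iterate n)
  have hdense : ∀ o ∈ b, Dense (⋃ n, f^[n] ⁻¹' o) := by
    intro o ho
    refine dense_iff_inter_open.2 fun U hU hUne => ?_
    obtain ⟨n, x, hxU, hxo⟩ := htrans U o hU (hb.isOpen ho) hUne
      (nonempty_iff_ne_empty.2 (ne_of_mem_of_not_mem ho hb_empty))
    exact ⟨x, hxU, mem_iUnion.2 ⟨n, hxo⟩⟩
  obtain ⟨x, hx⟩ := (dense_biInter_of_isOpen hopen hbc hdense).nonempty
  refine ⟨x, hb.dense_iff.2 fun o ho _ => ?_⟩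
  obtain ⟨n, hn⟩ := mem_iUnion.1 (mem_iInter₂.1 hx o ho)
  exact ⟨f^[n] x, hn, n, rfl⟩

section Criterion

variable {R E : Type*} [Semiring R] [AddCommMonoid E] [Module R E] [TopologicalSpace E]
  [ContinuousAdd E] (T : E →L[R] E)

theorem ContinuousLinearMap.topologicallyTransitive_of_dense_tendsto {D₁ D₂ : Set E}
    (hD₁ : Dense D₁) (hD₂ : Dense D₂)
    (h₁ : ∀ x ∈ D₁, Tendsto (fun n => (T ^ n) x) atTop (𝓝 0))
    (h₂ : ∀ y ∈ D₂, ∃ u : ℕ → E, Tendsto u atTop (𝓝 0) ∧ ∀ᶠ n in atTop, (T ^ n) (u n) = y) :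
    TopologicallyTransitive T := by
  intro U V hU hV hUne hVne
  obtain ⟨x, hxD, hxU⟩ := hD₁.exists_mem_open hU hUne
  obtain ⟨y, hyD, hyV⟩ := hD₂.exists_mem_open hV hVne
  obtain ⟨u, hu, hTu⟩ := h₂ y hyD
  have hU_ev : ∀ᶠ n in atTop, x + u n ∈ U := by
    have hlim : Tendsto (fun n => x + u n) atTop (𝓝 x) := by
      simpa using tendsto_const_nhds.add hu
    exact hlim.eventually_mem (hU.mem_nhds hxU)
  have hV_ev : ∀ᶠ n in atTop, (T ^ n) (x + u n) ∈ V := by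
    have hlim := ((h₁ x hxD).add_const y).eventually (hV.mem_nhds (by simpa using hyV))
    filter_upwards [hlim, hTu] with n hn hn'
    rwa [map_add, hn']
  obtain ⟨n, hnU, hnV⟩ := (hU_ev.and hV_ev).exists
  exact ⟨n, x + u n, hnU, by rwa [mem_preimage, ← FunLike.coe_pow_eq_iterate]⟩

variable [ContinuousConstSMul R E]

theorem ContinuousLinearMap.tendsto_pow_apply_of_mem_span {s : Set E}
    (hs : ∀ x ∈ s, Tendsto (fun n => (T ^ n) x) atTop (𝓝 0)) :
    ∀ x ∈ Submodule.span R s, Tendsto (fun n => (T ^ n) x) atTop (𝓝 0) := by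
  intro x hx
  induction hx using Submodule.span_induction with
  | mem x hx => exact hs x hx
  | zero => simpa using tendsto_const_nhds
  | add x y _ _ hx hy => simpa using hx.add hy
  | smul c x _ hx => simpa using hx.const_smul c

theorem ContinuousLinearMap.exists_tendsto_pow_apply_eq_of_mem_span {s : Set E}
    (hs : ∀ y ∈ s, ∃ u : ℕ → E, Tendsto u atTop (𝓝 0) ∧ ∀ᶠ n in atTop, (T ^ n) (u n) = y) :
    ∀ y ∈ Submodule.span R s,
      ∃ u : ℕ → E, Tendsto u atTop (𝓝 0) ∧ ∀ᶠ n in atTop, (T ^ n) (u n) = y := by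
  intro y hy
  induction hy using Submodule.span_induction with
  | mem y hy => exact hs y hy
  | zero => exact ⟨0, tendsto_const_nhds, by simp⟩
  | add y z _ _ hy hz =>
    obtain ⟨u, hu, hTu⟩ := hy
    obtain ⟨v, hv, hTv⟩ := hz
    refine ⟨fun n => u n + v n, by simpa using hu.add hv, ?_⟩
    filter_upwards [hTu, hTv] with n hn hn'
    rw [map_add, hn, hn']
  | smul c y _ hy =>
    obtain ⟨u, hu, hTu⟩ := hy
    refine ⟨fun n => c • u n, by simpa using hu.const_smul c, ?_⟩
    filter_upwards [hTu] with n hn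
    rw [map_smul, hn]

end Criterion

theorem separableSpace_of_dense_span {R M : Type*} [Semiring R] [TopologicalSpace R]
    [SeparableSpace R] [AddCommMonoid M] [Module R M] [TopologicalSpace M] [ContinuousAdd M]
    [ContinuousSMul R M] {s : Set M} (hs : s.Countable)
    (hdense : Dense (Submodule.span R s : Set M)) : SeparableSpace M :=
  isSeparable_univ_iff.1 (hdense.closure_eq ▸ hs.isSeparable.span.closure)

theorem lp.dense_span_single {𝕜 : Type*} [RCLike 𝕜] {ι : Type*} [DecidableEq ι] :
    Dense (Submodule.span 𝕜 (range fun i : ι => lp.single 2 i (1 : 𝕜)) :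
      Set (lp (fun _ : ι => 𝕜) 2)) := by
  let b : HilbertBasis ι 𝕜 (lp (fun _ : ι => 𝕜) 2) := default
  have hb : ⇑b = fun i => lp.single 2 i 1 := funext fun i => (b.repr_symm_single i).symm
  simpa [hb] using Submodule.dense_iff_topologicalClosure_eq_top.2 b.dense_span

def IsScaledBackwardShift (α : ℂ) (T : lp (fun _ : ℕ => ℂ) 2 →L[ℂ] lp (fun _ : ℕ => ℂ) 2) :
    Prop :=
  ∀ a : lp (fun _ : ℕ => ℂ) 2, ∀ n : ℕ, (T a) n = α * a (n + 1)

namespace IsScaledBackwardShift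

variable {α : ℂ} {T : lp (fun _ : ℕ => ℂ) 2 →L[ℂ] lp (fun _ : ℕ => ℂ) 2}

theorem pow_apply (hT : IsScaledBackwardShift α T) (n : ℕ) (a : lp (fun _ : ℕ => ℂ) 2) (k : ℕ) :
    ((T ^ n) a) k = α ^ n * a (k + n) := by
  induction n generalizing a with
  | zero => simp
  | succ n ih => rw [pow_succ, mul_apply_eq_comp, ih, hT, pow_succ]; ring_nf

theorem pow_single_of_lt (hT : IsScaledBackwardShift α T) {i n : ℕ} (hin : i < n) (c : ℂ) :
    (T ^ n) (lp.single 2 i c) = 0 := by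
  ext k
  rw [hT.pow_apply, lp.single_apply_ne _ _ _ (by omega)]
  simp

theorem pow_single_add (hT : IsScaledBackwardShift α T) (i n : ℕ) (c : ℂ) :
    (T ^ n) (lp.single 2 (i + n) c) = α ^ n • lp.single 2 i c := by
  ext k
  rw [hT.pow_apply, lp.coeFn_smul, Pi.smul_apply, lp.single_apply, lp.single_apply]
  by_cases hk : k = i
  · subst hk; simp
  · simp [hk]

theorem tendsto_pow_single (hT : IsScaledBackwardShift α T) (i : ℕ) (c : ℂ) :
    Tendsto (fun n => (T ^ n) (lp.single 2 i c)) atTop (𝓝 0) :=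
  tendsto_const_nhds.congr' <| (eventually_gt_atTop i).mono fun _ hin =>
    (hT.pow_single_of_lt hin c).symm

theorem exists_tendsto_pow_apply_eq_single (hT : IsScaledBackwardShift α T) (hα : 1 < ‖α‖)
    (i : ℕ) (c : ℂ) :
    ∃ u : ℕ → lp (fun _ : ℕ => ℂ) 2, Tendsto u atTop (𝓝 0) ∧
      ∀ᶠ n in atTop, (T ^ n) (u n) = lp.single 2 i c := by
  have hα₀ : α ≠ 0 := norm_pos_iff.1 (one_pos.trans hα)
  refine ⟨fun n => lp.single 2 (i + n) ((α ^ n)⁻¹ * c), ?_, Eventually.of_forall fun n => ?_⟩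
  · have hpow : Tendsto (fun n => ‖α‖⁻¹ ^ n * ‖c‖) atTop (𝓝 0) := by
      simpa using (tendsto_pow_atTop_nhds_zero_of_lt_one (by positivity)
        (inv_lt_one_of_one_lt₀ hα)).mul_const ‖c‖
    rw [tendsto_zero_iff_norm_tendsto_zero]
    simpa [lp.norm_single] using hpow
  · rw [hT.pow_single_add, ← lp.single_smul, smul_eq_mul,
      mul_inv_cancel_left₀ (pow_ne_zero n hα₀)]

end IsScaledBackwardShift

/-- Rolewicz's theorem: for `|α| > 1`, the multiple `α S*` of the backward shift
on `ℓ²(ℕ)` is hypercyclic. -/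
theorem stmt2 (α : ℂ) (hα : 1 < ‖α‖)
    (T : lp (fun _ : ℕ => ℂ) 2 →L[ℂ] lp (fun _ : ℕ => ℂ) 2)
    (hT : ∀ a : lp (fun _ : ℕ => ℂ) 2, ∀ n : ℕ, (T a) n = α * a (n + 1)) :
    Hypercyclic T := by
  have hshift : IsScaledBackwardShift α T := hT
  have hdense := lp.dense_span_single (𝕜 := ℂ) (ι := ℕ)
  have := separableSpace_of_dense_span (countable_range _) hdense
  have := UniformSpace.secondCountable_of_separable (lp (fun _ : ℕ => ℂ) 2)
  have htrans : TopologicallyTransitive T :=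
    T.topologicallyTransitive_of_dense_tendsto hdense hdense
      (T.tendsto_pow_apply_of_mem_span <| forall_mem_range.2 fun i =>
        hshift.tendsto_pow_single i 1)
      (T.exists_tendsto_pow_apply_eq_of_mem_span <| forall_mem_range.2 fun i =>
        hshift.exists_tendsto_pow_apply_eq_single hα i 1)
  obtain ⟨x, hx⟩ := htrans.exists_dense_orbit T.continuous
  exact ⟨x, by simpa only [FunLike.coe_pow_eq_iterate] using hx⟩
end
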